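/- Let $n, B_1$ be natural numbers with $2 \le n$ and $n < B_1 < 2n$, and set $s := 2n + 1 - B_1$ (so $s \ge 2$). Let $c, d \in \mathbb{C}$ with $c^{B_1 - n} = 1$ and $c^n \ne 1$, and define $\varphi(t) := c t + d t^s$. Let $q, \eta_2 : \mathbb{C} \to \mathbb{C}$ satisfy $q(t) - \tfrac{B_1}{n} t^{B_1 - n} = o(t^n)$ and $\eta_2(t) - t^{B_1} = o(t^{B_1})$ as $t \to 0$. For $(A, B) \in \mathbb{C}^2$ define $$W(t) := A\, t^{n}\, \big(-q(t),\ 1,\ 0,\ 0\big) + B\, \big(q(t) - q(\varphi(t)),\ 0,\ t^n - \varphi(t)^n,\ \eta_2(t) - \eta_2(\varphi(t))\big) \in \mathbb{C}^4.$$ Then $$\frac{1}{t^{n}}\, W(t) \longrightarrow \Big(-B\,\tfrac{B_1 (B_1 - n)}{n}\, c^{B_1 - n - 1}\, d,\ A,\ B\,(1 - c^n),\ 0\Big)$$ as $t \to 0$ along $t \ne 0$; moreover if $(A,B) \ne (0,0)$ this limit vector is nonzero (and its last coordinate is zero). -/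

import Mathlib

open Filter Asymptotics Topology

/-!
Write `φ t = t * (c + d * t ^ (s - 1))`. Since `c ≠ 0`, `φ` maps the punctured neighbourhood
of `0` to itself and `φ t` is comparable with `t`, so `o(t ^ k)` error terms survive composition
with `φ`. Because `c ^ (B₁ - n) = 1`, the leading terms of `q t` and `q (φ t)` cancel; writing
`tⁿ = t ^ (B₁ - n) * τ` with `τ = t ^ (s - 1)`, the first coordinate of `W t / tⁿ` is
`(B₁ / n) * (1 - (c + d * τ) ^ (B₁ - n)) / τ + o(1)`, minus a difference quotient of
`w ↦ (c + d * w) ^ (B₁ - n)` at `0`. The `η₂` coordinate is `O(t ^ B₁) = o(tⁿ)`, the third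
tends to `1 - cⁿ ≠ 0`, and the second is `A`, so the limit vanishes only when `A = B = 0`.
-/

section NormedField

variable {𝕜 : Type*} [NormedField 𝕜]

theorem tendsto_pow_nhdsNE_zero {j : ℕ} (hj : j ≠ 0) :
    Tendsto (fun t : 𝕜 => t ^ j) (𝓝[≠] 0) (𝓝[≠] 0) := by
  refine tendsto_nhdsWithin_of_tendsto_nhds_of_eventually_within _ ?_ ?_
  · exact ((continuous_pow j).tendsto' 0 0 (zero_pow hj)).mono_left nhdsWithin_le_nhds
  · filter_upwards [self_mem_nhdsWithin] with t ht using pow_ne_zero j ht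

theorem tendsto_const_add_mul_pow_nhdsNE (c d : 𝕜) {j : ℕ} (hj : j ≠ 0) :
    Tendsto (fun t : 𝕜 => c + d * t ^ j) (𝓝[≠] 0) (𝓝 c) := by
  simpa using
    (((tendsto_pow_nhdsNE_zero hj).mono_right nhdsWithin_le_nhds).const_mul d).const_add c

variable {g : 𝕜 → 𝕜} {a : 𝕜}

theorem tendsto_mul_nhdsNE_zero (hg : Tendsto g (𝓝[≠] 0) (𝓝 a)) (ha : a ≠ 0) :
    Tendsto (fun t => t * g t) (𝓝[≠] 0) (𝓝[≠] 0) := by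
  refine tendsto_nhdsWithin_of_tendsto_nhds_of_eventually_within _ ?_ ?_
  · simpa using (tendsto_nhdsWithin_of_tendsto_nhds tendsto_id).mul hg
  · filter_upwards [self_mem_nhdsWithin, hg.eventually_ne ha] with t ht hgt
    exact mul_ne_zero ht hgt

theorem isBigO_mul_pow (hg : Tendsto g (𝓝[≠] 0) (𝓝 a)) (k : ℕ) :
    (fun t => (t * g t) ^ k) =O[𝓝[≠] 0] fun t => t ^ k := by
  simpa [mul_pow] using (isBigO_refl (fun t : 𝕜 => t ^ k) _).mul ((hg.pow k).isBigO_one 𝕜)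

theorem Asymptotics.IsBigO.comp_mul {f : 𝕜 → 𝕜} {k : ℕ}
    (hf : f =O[𝓝[≠] 0] fun t => t ^ k) (hg : Tendsto g (𝓝[≠] 0) (𝓝 a)) (ha : a ≠ 0) :
    (fun t => f (t * g t)) =O[𝓝[≠] 0] fun t => t ^ k :=
  (hf.comp_tendsto (tendsto_mul_nhdsNE_zero hg ha)).trans (isBigO_mul_pow hg k)

theorem Asymptotics.IsLittleO.comp_mul {f : 𝕜 → 𝕜} {k : ℕ}
    (hf : f =o[𝓝[≠] 0] fun t => t ^ k) (hg : Tendsto g (𝓝[≠] 0) (𝓝 a)) (ha : a ≠ 0) :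
    (fun t => f (t * g t)) =o[𝓝[≠] 0] fun t => t ^ k :=
  (hf.comp_tendsto (tendsto_mul_nhdsNE_zero hg ha)).trans_isBigO (isBigO_mul_pow hg k)

theorem sub_comp_mul_isLittleO {η : 𝕜 → 𝕜} {p n : ℕ}
    (hη : (fun t => η t - t ^ p) =o[𝓝[≠] 0] fun t => t ^ p) (hnp : n < p)
    (hg : Tendsto g (𝓝[≠] 0) (𝓝 a)) (ha : a ≠ 0) :
    (fun t => η t - η (t * g t)) =o[𝓝[≠] 0] fun t => t ^ n := by
  have hηO : η =O[𝓝[≠] 0] fun t => t ^ p := by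
    simpa using hη.isBigO.add (isBigO_refl (fun t : 𝕜 => t ^ p) _)
  exact (hηO.sub (hηO.comp_mul hg ha)).trans_isLittleO
    ((isLittleO_pow_pow hnp).mono nhdsWithin_le_nhds)

theorem tendsto_inv_pow_smul_add_smul {n : ℕ} {A B L₀ L₂ : 𝕜} {q u₀ u₂ u₃ : 𝕜 → 𝕜}
    (hq : Tendsto q (𝓝[≠] 0) (𝓝 0))
    (h₀ : Tendsto (fun t => u₀ t / t ^ n) (𝓝[≠] 0) (𝓝 L₀))
    (h₂ : Tendsto (fun t => u₂ t / t ^ n) (𝓝[≠] 0) (𝓝 L₂))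
    (h₃ : Tendsto (fun t => u₃ t / t ^ n) (𝓝[≠] 0) (𝓝 0)) :
    Tendsto
      (fun t => (t ^ n)⁻¹ • ((A * t ^ n) • ![-q t, 1, 0, 0] + B • ![u₀ t, 0, u₂ t, u₃ t]))
      (𝓝[≠] 0) (𝓝 ![B * L₀, A, B * L₂, 0]) := by
  have hlim : Tendsto
      (fun t => A • ![-q t, 1, 0, 0] + B • ![u₀ t / t ^ n, 0, u₂ t / t ^ n, u₃ t / t ^ n])
      (𝓝[≠] 0) (𝓝 (A • ![-0, 1, 0, 0] + B • ![L₀, 0, L₂, 0])) := by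
    refine (Tendsto.const_smul ?_ A).add (Tendsto.const_smul ?_ B) <;>
      repeat' first
        | exact tendsto_const_nhds
        | exact hq.neg
        | assumption
        | refine Tendsto.matrixVecCons ?_ ?_
  convert hlim.congr' ?_ using 2
  · ext i; fin_cases i <;> simp
  · filter_upwards [self_mem_nhdsWithin] with t (ht : t ≠ 0)
    ext i; fin_cases i <;> simp [field]

end NormedField

section NontriviallyNormedField

variable {𝕜 : Type*} [NontriviallyNormedField 𝕜]

theorem tendsto_one_sub_pow_div {c d : 𝕜} {m j : ℕ} (hc : c ^ m = 1) (hj : j ≠ 0) :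
    Tendsto (fun t => (1 - (c + d * t ^ j) ^ m) / t ^ j) (𝓝[≠] 0)
      (𝓝 (-(m * c ^ (m - 1) * d))) := by
  have hder : HasDerivAt (fun w => (c + d * w) ^ m) (m * c ^ (m - 1) * d) 0 := by
    simpa using (((hasDerivAt_id (0 : 𝕜)).const_mul d).const_add c).fun_pow m
  refine ((hasDerivAt_iff_tendsto_slope.mp hder).comp (tendsto_pow_nhdsNE_zero hj)).neg.congr
    fun t => ?_
  simp only [Function.comp_apply, slope_def_field, hc, mul_zero, add_zero, sub_zero]
  ring

theorem tendsto_sub_comp_div_pow {q : 𝕜 → 𝕜} {k c d : 𝕜} {m j N : ℕ} (hc0 : c ≠ 0)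
    (hc : c ^ m = 1) (hj : j ≠ 0) (hN : m + j = N)
    (hq : (fun t => q t - k * t ^ m) =o[𝓝[≠] 0] fun t => t ^ N) :
    Tendsto (fun t => (q t - q (t * (c + d * t ^ j))) / t ^ N) (𝓝[≠] 0)
      (𝓝 (-(k * m * c ^ (m - 1) * d))) := by
  subst hN
  have hqg := hq.comp_mul (tendsto_const_add_mul_pow_nhdsNE c d hj) hc0
  have key := ((tendsto_one_sub_pow_div (d := d) hc hj).const_mul k).add
    (hq.tendsto_div_nhds_zero.sub hqg.tendsto_div_nhds_zero)
  rw [sub_zero, add_zero, mul_neg, ← mul_assoc, ← mul_assoc] at key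
  refine key.congr' ?_
  filter_upwards [self_mem_nhdsWithin] with t (ht : t ≠ 0)
  rw [mul_pow, pow_add]
  generalize q (t * (c + d * t ^ j)) = Q
  field_simp
  ring

end NontriviallyNormedField

theorem vecCons_four_ne_zero {R : Type*} [MulZeroClass R] [NoZeroDivisors R] {A B y : R}
    (x z : R) (hAB : (A, B) ≠ (0, 0)) (hy : y ≠ 0) : ![x, A, B * y, z] ≠ 0 := by
  intro h
  have hA : A = 0 := congrFun h 1
  have hB : B = 0 := (mul_eq_zero.mp (congrFun h 2)).resolve_right hy
  exact hAB (by rw [hA, hB])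

theorem stmt_13_general (n B1 : ℕ) (hB1 : n < B1) (hB1' : B1 < 2 * n)
    (s : ℕ) (hs : s = 2 * n + 1 - B1)
    (c d : ℂ) (hc : c ^ (B1 - n) = 1) (hc' : c ^ n ≠ 1)
    (φ : ℂ → ℂ) (hφ : ∀ t, φ t = c * t + d * t ^ s)
    (q η2 : ℂ → ℂ)
    (hq : (fun t => q t - ((B1 : ℂ) / (n : ℂ)) * t ^ (B1 - n))
      =o[𝓝[≠] (0:ℂ)] fun t => t ^ n)
    (hη2 : (fun t => η2 t - t ^ B1) =o[𝓝[≠] (0:ℂ)] fun t => t ^ B1)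
    (A B : ℂ)
    (W : ℂ → Fin 4 → ℂ)
    (hW : ∀ t, W t =
      (A * t ^ n) • (![-q t, 1, 0, 0] : Fin 4 → ℂ) +
      B • (![q t - q (φ t), 0, t ^ n - φ t ^ n, η2 t - η2 (φ t)] : Fin 4 → ℂ)) :
    Tendsto (fun t => (t ^ n)⁻¹ • W t) (𝓝[≠] (0:ℂ))
      (𝓝 ![-B * (((B1 : ℂ) * ((B1 : ℂ) - (n : ℂ))) / (n : ℂ)) * c ^ (B1 - n - 1) * d,
            A, B * (1 - c ^ n), 0]) ∧
    ((A, B) ≠ (0, 0) →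
      (![-B * (((B1 : ℂ) * ((B1 : ℂ) - (n : ℂ))) / (n : ℂ)) * c ^ (B1 - n - 1) * d,
         A, B * (1 - c ^ n), 0] : Fin 4 → ℂ) ≠ 0) := by
  have hm : B1 - n ≠ 0 := by omega
  have hc0 : c ≠ 0 := by
    rintro rfl
    exact zero_ne_one ((zero_pow hm).symm.trans hc)
  obtain ⟨j, rfl⟩ : ∃ j, s = j + 1 := ⟨s - 1, by omega⟩
  have hj : j ≠ 0 := by omega
  obtain rfl : φ = fun t => t * (c + d * t ^ j) := funext fun t => by rw [hφ]; ring
  have hg := tendsto_const_add_mul_pow_nhdsNE c d hj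
  have hq0 : Tendsto q (𝓝[≠] 0) (𝓝 0) := by
    have h := hq.trans_tendsto ((tendsto_pow_nhdsNE_zero (by omega)).mono_right nhdsWithin_le_nhds)
    simpa using h.add (((tendsto_pow_nhdsNE_zero hm).mono_right nhdsWithin_le_nhds).const_mul
      ((B1 : ℂ) / n))
  have h₀ := tendsto_sub_comp_div_pow (d := d) hc0 hc hj (by omega) hq
  have h₂ : Tendsto (fun t => (t ^ n - (t * (c + d * t ^ j)) ^ n) / t ^ n) (𝓝[≠] 0)
      (𝓝 (1 - c ^ n)) := by
    refine ((hg.pow n).const_sub 1).congr' ?_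
    filter_upwards [self_mem_nhdsWithin] with t (ht : t ≠ 0)
    rw [mul_pow]
    field_simp
  have h₃ := (sub_comp_mul_isLittleO hη2 hB1 hg hc0).tendsto_div_nhds_zero
  refine ⟨?_, fun hAB => vecCons_four_ne_zero _ _ hAB (sub_ne_zero.2 hc'.symm)⟩
  rw [show W = _ from funext hW]
  convert tendsto_inv_pow_smul_add_smul hq0 h₀ h₂ h₃ using 3
  rw [Nat.cast_sub hB1.le]
  ring

/-- Case B (`2n > B₁ > n`) of the proof of Theorem 3.8 of the paper. -/
theorem stmt_13 (n B1 : ℕ) (hn : 2 ≤ n) (hB1 : n < B1) (hB1' : B1 < 2 * n)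
    (s : ℕ) (hs : s = 2 * n + 1 - B1)
    (c d : ℂ) (hc : c ^ (B1 - n) = 1) (hc' : c ^ n ≠ 1)
    (φ : ℂ → ℂ) (hφ : ∀ t, φ t = c * t + d * t ^ s)
    (q η2 : ℂ → ℂ)
    (hq : (fun t => q t - ((B1 : ℂ) / (n : ℂ)) * t ^ (B1 - n))
      =o[𝓝[≠] (0:ℂ)] fun t => t ^ n)
    (hη2 : (fun t => η2 t - t ^ B1) =o[𝓝[≠] (0:ℂ)] fun t => t ^ B1)
    (A B : ℂ)
    (W : ℂ → Fin 4 → ℂ)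
    (hW : ∀ t, W t =
      (A * t ^ n) • (![-q t, 1, 0, 0] : Fin 4 → ℂ) +
      B • (![q t - q (φ t), 0, t ^ n - φ t ^ n, η2 t - η2 (φ t)] : Fin 4 → ℂ)) :
    Tendsto (fun t => (t ^ n)⁻¹ • W t) (𝓝[≠] (0:ℂ))
      (𝓝 ![-B * (((B1 : ℂ) * ((B1 : ℂ) - (n : ℂ))) / (n : ℂ)) * c ^ (B1 - n - 1) * d,
            A, B * (1 - c ^ n), 0]) ∧
    ((A, B) ≠ (0, 0) →
      (![-B * (((B1 : ℂ) * ((B1 : ℂ) - (n : ℂ))) / (n : ℂ)) * c ^ (B1 - n - 1) * d,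
         A, B * (1 - c ^ n), 0] : Fin 4 → ℂ) ≠ 0) :=
  stmt_13_general n B1 hB1 hB1' s hs c d hc hc' φ hφ q η2 hq hη2 A B W hW
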